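/- (Characterisation of the stabilised map, Section 3.6.1 of 'Stability of concordance embeddings'.) Assume M is Hausdorff. For every continuous concordance map e of P in M, σ(e) is the unique continuous map F : P×J×I → M×J×I that agrees with the inclusion (p,s,t) ↦ (p,s,t) on P×D₂ and satisfies F(p, Λ(r,θ)) = (e_M(p,r), Λ(e_I(p,r),θ)) for all p ∈ P and all (r,θ) ∈ [0,1)×[0,π]; here the second condition determines F on P×(D₁ ∖ {(0,1)}) since Λ restricts to a homeomorphism [0,1)×[0,π] ≅ D₁ ∖ {(0,1)}. -/

import Mathlib

/-!
STATEMENT 5: characterisation of the stabilised map `σ(e)` as the unique continuous map that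
is the inclusion on `P × D₂` and is given by the polar formula on `P × (D₁ ∖ {(0,1)})`.
-/
open Set unitInterval Topology

noncomputable section

abbrev JJ : Set ℝ := Set.Icc (-1 : ℝ) 1

/-- The polar parametrisation `Λ(r,θ) = ((1−r)cos(θ+π), (1−r)sin(θ+π) + 1)`. -/
def Lam : ℝ × ℝ → ℝ × ℝ :=
  fun p => ((1 - p.1) * Real.cos (p.2 + Real.pi), (1 - p.1) * Real.sin (p.2 + Real.pi) + 1)

def D1 : Set (ℝ × ℝ) := {z | z.1 ∈ JJ ∧ z.2 ∈ Set.Icc (0:ℝ) 1 ∧ z.1 ^ 2 + (z.2 - 1) ^ 2 ≤ 1}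
def D2 : Set (ℝ × ℝ) := {z | z.1 ∈ JJ ∧ z.2 ∈ Set.Icc (0:ℝ) 1 ∧ 1 ≤ z.1 ^ 2 + (z.2 - 1) ^ 2}

/-- `φ : P × I → M × I` is a continuous concordance map of `P` in `M` relative to `A`. -/
def IsConcMap {M : Type} [TopologicalSpace M] (P A : Set M) (φ : ↥P × ↥I → M × ↥I) : Prop :=
  Continuous φ ∧
  (∀ x : ↥P × ↥I, ((φ x).2 = 0 ↔ x.2 = 0) ∧ ((φ x).2 = 1 ↔ x.2 = 1)) ∧
  ∃ U : Set (↥P × ↥I), IsOpen U ∧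
    ({x : ↥P × ↥I | x.2 = 0} ∪ {x : ↥P × ↥I | (x.1 : M) ∈ A}) ⊆ U ∧
    ∀ x ∈ U, φ x = ((x.1 : M), x.2)

/-- `F : P × J × I → M × J × I` satisfies the two clauses defining the stabilisation `σ(e)`:
on `P × D₁` it is given (in the polar coordinates `Λ`) by
`σ(e)(p, Λ(r,θ)) = (e_M(p,r), Λ(e_I(p,r), θ))`, and on `P × D₂` it is the inclusion. -/
def IsSigmaOf {M : Type} [TopologicalSpace M] (P : Set M)
    (e : ↥P × ↥I → M × ↥I) (F : ↥P × ↥JJ × ↥I → M × ↥JJ × ↥I) : Prop :=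
  (∀ (p : ↥P) (s : ↥JJ) (t : ↥I) (r : ↥I) (θ : ℝ), θ ∈ Set.Icc 0 Real.pi →
    ((s : ℝ), (t : ℝ)) = Lam ((r : ℝ), θ) →
    (F (p, s, t)).1 = (e (p, r)).1 ∧
    (((F (p, s, t)).2.1 : ℝ), ((F (p, s, t)).2.2 : ℝ)) = Lam (((e (p, r)).2 : ℝ), θ)) ∧
  (∀ (p : ↥P) (s : ↥JJ) (t : ↥I), ((s : ℝ), (t : ℝ)) ∈ D2 → F (p, s, t) = ((p : M), s, t))

/-- `F : P × J × I → M × J × I` is a continuous concordance map of `P × J` in `M × J`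
relative to `(A × J) ∪ (P × {−1,1})`. -/
def IsConcMapJ {M : Type} [TopologicalSpace M] (P A : Set M)
    (F : ↥P × ↥JJ × ↥I → M × ↥JJ × ↥I) : Prop :=
  Continuous F ∧
  (∀ x : ↥P × ↥JJ × ↥I, ((F x).2.2 = 0 ↔ x.2.2 = 0) ∧ ((F x).2.2 = 1 ↔ x.2.2 = 1)) ∧
  ∃ U : Set (↥P × ↥JJ × ↥I), IsOpen U ∧
    ({x : ↥P × ↥JJ × ↥I | x.2.2 = 0} ∪
     {x : ↥P × ↥JJ × ↥I | (x.1 : M) ∈ A ∨ (x.2.1 : ℝ) = -1 ∨ (x.2.1 : ℝ) = 1}) ⊆ U ∧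
    ∀ x ∈ U, F x = ((x.1 : M), x.2.1, x.2.2)


/-!
Writing `(s, t) = Λ(r, θ)`, the point lies at Euclidean distance `1 - r` from `(0, 1)`, and
`σ(e)` multiplies `(s, t) - (0, 1)` by `(1 - e_I(p, r)) / (1 - r)`. Reading `r` off the distance
and clamping it at `0` outside the unit disc gives a closed formula on all of `J × I`; it is the
identity on `D₂` because `e(p, 0) = (p, 0)`. The rescaled unit vector stays bounded while
`1 - e_I(p, r) → 0` as `r → 1` (since `e_I(p, 1) = 1`), so the formula is continuous at the centre
too. Uniqueness: the conditions pin a continuous map down off the nowhere dense set `t = 1`,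
and the target is Hausdorff.
-/

open Filter Real

theorem IsConcMap.apply_zero {M : Type} [TopologicalSpace M] {P A : Set M}
    {e : ↥P × ↥I → M × ↥I} (he : IsConcMap P A e) (p : ↥P) : e (p, 0) = ((p : M), 0) := by
  obtain ⟨-, -, U, -, hsub, hU⟩ := he
  exact hU (p, 0) (hsub (Or.inl rfl))

theorem IsConcMap.snd_apply_one {M : Type} [TopologicalSpace M] {P A : Set M}
    {e : ↥P × ↥I → M × ↥I} (he : IsConcMap P A e) (p : ↥P) : (e (p, 1)).2 = 1 :=
  ((he.2.1 (p, 1)).2).2 rfl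

theorem abs_div_le_one_of_abs_le {a b : ℝ} (h : |a| ≤ b) : |a / b| ≤ 1 := by
  have hb : 0 ≤ b := (abs_nonneg a).trans h
  rw [abs_div, abs_of_nonneg hb]
  exact div_le_one_of_le₀ h hb

theorem continuous_mul_div_of_abs_le {X : Type*} [TopologicalSpace X] {u w m : X → ℝ}
    (hu : Continuous u) (hw : Continuous w) (hm : Continuous m) (hwm : ∀ x, |w x| ≤ m x)
    (hum : ∀ x, m x = 0 → u x = 0) : Continuous fun x => u x * (w x / m x) := by
  refine continuous_iff_continuousAt.2 fun x₀ => ?_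
  by_cases h₀ : m x₀ = 0
  · have hbdd : IsBoundedUnder (· ≤ ·) (𝓝 x₀) ((‖·‖) ∘ fun x => w x / m x) :=
      isBoundedUnder_of ⟨1, fun x => abs_div_le_one_of_abs_le (hwm x)⟩
    have hu₀ : Tendsto u (𝓝 x₀) (𝓝 0) := hum x₀ h₀ ▸ hu.tendsto x₀
    simpa [ContinuousAt, hum x₀ h₀] using hu₀.zero_mul_isBoundedUnder_le hbdd
  · exact hu.continuousAt.mul (hw.continuousAt.div hm.continuousAt h₀)

namespace Stabilisation

/-- Euclidean distance from `(0, 1)` (the norm on `ℝ × ℝ` is the sup norm). -/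
def radius (z : ℝ × ℝ) : ℝ := √(z.1 ^ 2 + (z.2 - 1) ^ 2)

theorem continuous_radius : Continuous radius := by
  unfold radius
  fun_prop

theorem radius_nonneg (z : ℝ × ℝ) : 0 ≤ radius z := sqrt_nonneg _

theorem abs_fst_le_radius (z : ℝ × ℝ) : |z.1| ≤ radius z := by
  rw [radius, ← sqrt_sq_eq_abs]
  exact sqrt_le_sqrt (le_add_of_nonneg_right (sq_nonneg _))

theorem abs_snd_sub_one_le_radius (z : ℝ × ℝ) : |z.2 - 1| ≤ radius z := by
  rw [radius, ← sqrt_sq_eq_abs]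
  exact sqrt_le_sqrt (le_add_of_nonneg_left (sq_nonneg _))

theorem radius_pos_of_snd_ne_one {z : ℝ × ℝ} (h : z.2 ≠ 1) : 0 < radius z :=
  (abs_pos.2 (sub_ne_zero.2 h)).trans_le (abs_snd_sub_one_le_radius z)

theorem abs_fst_le_min_radius {z : ℝ × ℝ} (hz : z ∈ JJ ×ˢ I) : |z.1| ≤ min 1 (radius z) :=
  le_min (abs_le.2 hz.1) (abs_fst_le_radius z)

theorem abs_one_sub_snd_le_min_radius {z : ℝ × ℝ} (hz : z ∈ JJ ×ˢ I) :
    |1 - z.2| ≤ min 1 (radius z) := by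
  rw [abs_sub_comm]
  exact le_min (abs_le.2 ⟨by linarith [hz.2.1], by linarith [hz.2.2]⟩)
    (abs_snd_sub_one_le_radius z)

theorem Lam_apply (r θ : ℝ) : Lam (r, θ) = (-((1 - r) * cos θ), 1 - (1 - r) * sin θ) := by
  simp only [Lam, cos_add_pi, sin_add_pi]
  ext <;> ring

theorem radius_Lam {r : ℝ} (hr : r ≤ 1) (θ : ℝ) : radius (Lam (r, θ)) = 1 - r := by
  rw [radius, Lam_apply]
  have hsq : (-((1 - r) * cos θ)) ^ 2 + (1 - (1 - r) * sin θ - 1) ^ 2 = (1 - r) ^ 2 := by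
    linear_combination (1 - r) ^ 2 * cos_sq_add_sin_sq θ
  rw [hsq, sqrt_sq (by linarith)]

theorem exists_Lam_eq {z : ℝ × ℝ} (hz : z.2 ≤ 1) : ∃ θ ∈ Icc 0 π, z = Lam (1 - radius z, θ) := by
  rcases (radius_nonneg z).eq_or_lt with h₀ | hpos
  · have h₁ : z.1 = 0 := abs_nonpos_iff.1 (h₀ ▸ abs_fst_le_radius z)
    have h₂ : z.2 - 1 = 0 := abs_nonpos_iff.1 (h₀ ▸ abs_snd_sub_one_le_radius z)
    refine ⟨0, ⟨le_rfl, pi_pos.le⟩, ?_⟩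
    rw [Lam_apply, ← h₀]
    ext <;> simp <;> linarith
  · have hcos :=
      abs_le.1 (abs_div_le_one_of_abs_le ((abs_neg z.1).trans_le (abs_fst_le_radius z)))
    have hsq := sq_sqrt (add_nonneg (sq_nonneg z.1) (sq_nonneg (z.2 - 1)))
    refine ⟨arccos (-z.1 / radius z), ⟨arccos_nonneg _, arccos_le_pi _⟩, ?_⟩
    have hsin : sin (arccos (-z.1 / radius z)) = (1 - z.2) / radius z := by
      have hsq' : 1 - (-z.1 / radius z) ^ 2 = ((1 - z.2) / radius z) ^ 2 := by
        rw [radius] at hpos ⊢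
        field_simp
        linear_combination hsq
      rw [sin_arccos, hsq', sqrt_sq (div_nonneg (by linarith) hpos.le)]
    rw [Lam_apply, cos_arccos hcos.1 hcos.2, hsin, sub_sub_cancel]
    ext <;> field_simp
    ring

/-- `min 1 (radius z)` is `1 - r` at `z = Λ(r, θ)` and `1` on `D₂`. -/
def stretch (b : ℝ) (z : ℝ × ℝ) : ℝ × ℝ :=
  ((1 - b) * (z.1 / min 1 (radius z)), 1 - (1 - b) * ((1 - z.2) / min 1 (radius z)))

theorem stretch_Lam {r : ℝ} (hr₀ : 0 ≤ r) (hr₁ : r < 1) (b θ : ℝ) :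
    stretch b (Lam (r, θ)) = Lam (b, θ) := by
  have hmin : min 1 (radius (Lam (r, θ))) = 1 - r := by
    rw [radius_Lam hr₁.le]
    exact min_eq_right (by linarith)
  have hne : 1 - r ≠ 0 := by linarith
  rw [stretch, hmin, Lam_apply, Lam_apply]
  ext <;> field_simp
  ring

theorem stretch_one (z : ℝ × ℝ) (θ : ℝ) : stretch 1 z = Lam (1, θ) := by
  rw [stretch, Lam_apply]
  ext <;> simp

theorem stretch_zero_of_one_le_radius {z : ℝ × ℝ} (h : 1 ≤ radius z) : stretch 0 z = z := by
  rw [stretch, min_eq_left h]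
  ext <;> simp

theorem stretch_mem {b : ℝ} {z : ℝ × ℝ} (hb : b ∈ I) (hz : z ∈ JJ ×ˢ I) :
    stretch b z ∈ JJ ×ˢ I := by
  have h₁ := abs_le.1 (abs_div_le_one_of_abs_le (abs_fst_le_min_radius hz))
  have h₂ := abs_le.1 (abs_div_le_one_of_abs_le (abs_one_sub_snd_le_min_radius hz))
  have h₃ : 0 ≤ (1 - z.2) / min 1 (radius z) :=
    div_nonneg (by linarith [hz.2.2]) (le_min zero_le_one (radius_nonneg z))
  have hb₀ := hb.1
  have hb₁ := hb.2
  refine ⟨⟨?_, ?_⟩, ?_, ?_⟩ <;> simp only [stretch] <;> nlinarith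

theorem continuous_stretch {X : Type*} [TopologicalSpace X] {b : X → ℝ} {z : X → ℝ × ℝ}
    (hb : Continuous b) (hz : Continuous z) (hzJI : ∀ x, z x ∈ JJ ×ˢ I)
    (hb₁ : ∀ x, radius (z x) = 0 → b x = 1) : Continuous fun x => stretch (b x) (z x) := by
  have hm : Continuous fun x => min 1 (radius (z x)) :=
    continuous_const.min (continuous_radius.comp hz)
  have hvanish : ∀ x, min 1 (radius (z x)) = 0 → 1 - b x = 0 := fun x hx => by
    have hr : radius (z x) = 0 :=
      le_antisymm ((min_le_iff.1 hx.le).resolve_left (by norm_num)) (radius_nonneg _)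
    rw [hb₁ x hr, sub_self]
  exact (continuous_mul_div_of_abs_le (continuous_const.sub hb) (continuous_fst.comp hz) hm
      (fun x => abs_fst_le_min_radius (hzJI x)) hvanish).prodMk
    (continuous_const.sub (continuous_mul_div_of_abs_le (continuous_const.sub hb)
      (continuous_const.sub (continuous_snd.comp hz)) hm
      (fun x => abs_one_sub_snd_le_min_radius (hzJI x)) hvanish))

variable {M : Type} {P : Set M} {e : ↥P × ↥I → M × ↥I}

def plane (x : ↥P × ↥JJ × ↥I) : ℝ × ℝ := (x.2.1, x.2.2)

theorem plane_mem (x : ↥P × ↥JJ × ↥I) : plane x ∈ JJ ×ˢ I := ⟨x.2.1.2, x.2.2.2⟩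

/-- The `r` of `(s, t) = Λ(r, θ)`, clamped to `0` on `D₂`. -/
def radialCoord (x : ↥P × ↥JJ × ↥I) : I := projIcc 0 1 zero_le_one (1 - radius (plane x))

theorem coe_radialCoord {x : ↥P × ↥JJ × ↥I} (h : radius (plane x) ≤ 1) :
    (radialCoord x : ℝ) = 1 - radius (plane x) := by
  rw [radialCoord, projIcc_of_mem _ ⟨by linarith, by linarith [radius_nonneg (plane x)]⟩]

theorem radialCoord_of_plane_eq_Lam {x : ↥P × ↥JJ × ↥I} {r : I} {θ : ℝ}
    (h : plane x = Lam (r, θ)) : radialCoord x = r := by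
  rw [radialCoord, h, radius_Lam r.2.2, sub_sub_cancel, projIcc_val]

theorem radialCoord_of_one_le_radius {x : ↥P × ↥JJ × ↥I} (h : 1 ≤ radius (plane x)) :
    radialCoord x = 0 :=
  projIcc_of_le_left _ (by linarith)

theorem radialCoord_eq_one {x : ↥P × ↥JJ × ↥I} (h : radius (plane x) = 0) : radialCoord x = 1 := by
  rw [radialCoord, h, sub_zero]
  exact projIcc_right _

def stabilisation (e : ↥P × ↥I → M × ↥I) (x : ↥P × ↥JJ × ↥I) : M × ↥JJ × ↥I :=
  ((e (x.1, radialCoord x)).1,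
    ⟨(stretch (e (x.1, radialCoord x)).2 (plane x)).1,
      (stretch_mem (e (x.1, radialCoord x)).2.2 (plane_mem x)).1⟩,
    ⟨(stretch (e (x.1, radialCoord x)).2 (plane x)).2,
      (stretch_mem (e (x.1, radialCoord x)).2.2 (plane_mem x)).2⟩)

theorem stabilisation_fst (x : ↥P × ↥JJ × ↥I) :
    (stabilisation e x).1 = (e (x.1, radialCoord x)).1 :=
  rfl

theorem coe_stabilisation_snd (x : ↥P × ↥JJ × ↥I) :
    (((stabilisation e x).2.1 : ℝ), ((stabilisation e x).2.2 : ℝ)) =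
      stretch (e (x.1, radialCoord x)).2 (plane x) :=
  rfl

variable [TopologicalSpace M] {A : Set M}

theorem continuous_plane : Continuous (plane (P := P)) := by
  unfold plane
  fun_prop

theorem continuous_radialCoord : Continuous (radialCoord (P := P)) :=
  continuous_projIcc.comp (continuous_const.sub (continuous_radius.comp continuous_plane))

theorem isSigmaOf_stabilisation (he : IsConcMap P A e) : IsSigmaOf P e (stabilisation e) := by
  refine ⟨fun p s t r θ _ hst => ?_, fun p s t hst => ?_⟩
  · have hr : radialCoord (p, s, t) = r := radialCoord_of_plane_eq_Lam hst
    refine ⟨by rw [stabilisation_fst, hr], ?_⟩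
    rw [coe_stabilisation_snd, hr, plane, hst]
    rcases r.2.2.lt_or_eq with hr₁ | hr₁
    · exact stretch_Lam r.2.1 hr₁ _ θ
    · obtain rfl : r = 1 := Subtype.ext hr₁
      rw [he.snd_apply_one, Icc.coe_one, stretch_one]
  · have hrad : 1 ≤ radius (plane (p, s, t)) := one_le_sqrt.2 hst.2.2
    have hr : radialCoord (p, s, t) = 0 := radialCoord_of_one_le_radius hrad
    have h₀ := he.apply_zero p
    refine Prod.ext (by rw [stabilisation_fst, hr, h₀]) (Prod.ext (Subtype.ext ?_) (Subtype.ext ?_))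
    all_goals
      have h := coe_stabilisation_snd (e := e) (p, s, t)
      rw [hr, h₀, Icc.coe_zero, stretch_zero_of_one_le_radius hrad] at h
    exacts [congr(($h).1), congr(($h).2)]

theorem continuous_stabilisation (he : IsConcMap P A e) : Continuous (stabilisation e) := by
  have hy : Continuous fun x : ↥P × ↥JJ × ↥I => e (x.1, radialCoord x) :=
    he.1.comp (continuous_fst.prodMk continuous_radialCoord)
  have hs := continuous_stretch (continuous_subtype_val.comp hy.snd) continuous_plane plane_mem
    fun x hx => by rw [Function.comp_apply, radialCoord_eq_one hx, he.snd_apply_one, Icc.coe_one]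
  exact hy.fst.prodMk ((hs.fst.subtype_mk _).prodMk (hs.snd.subtype_mk _))

theorem eqOn_stabilisation (he : IsConcMap P A e) {G : ↥P × ↥JJ × ↥I → M × ↥JJ × ↥I}
    (hG₂ : ∀ (p : ↥P) (s : ↥JJ) (t : ↥I), ((s : ℝ), (t : ℝ)) ∈ D2 →
      G (p, s, t) = ((p : M), s, t))
    (hG₁ : ∀ (p : ↥P) (r : ↥I) (θ : ℝ), (r : ℝ) < 1 → θ ∈ Set.Icc 0 Real.pi →
      ∀ (s : ↥JJ) (t : ↥I), ((s : ℝ), (t : ℝ)) = Lam ((r : ℝ), θ) →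
      (G (p, s, t)).1 = (e (p, r)).1 ∧
      (((G (p, s, t)).2.1 : ℝ), ((G (p, s, t)).2.2 : ℝ)) = Lam (((e (p, r)).2 : ℝ), θ)) :
    EqOn G (stabilisation e) {x | x.2.2 ≠ 1} := by
  rintro ⟨p, s, t⟩ (ht : t ≠ 1)
  by_cases hrad : 1 ≤ radius (plane (p, s, t))
  · have hD2 : ((s : ℝ), (t : ℝ)) ∈ D2 := ⟨s.2, t.2, one_le_sqrt.1 hrad⟩
    rw [hG₂ p s t hD2, (isSigmaOf_stabilisation he).2 p s t hD2]
  · have hpos : 0 < radius (plane (p, s, t)) :=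
      radius_pos_of_snd_ne_one fun h => ht (Subtype.ext h)
    obtain ⟨θ, hθ, hLam⟩ := exists_Lam_eq (z := plane (p, s, t)) t.2.2
    rw [← coe_radialCoord (not_le.1 hrad).le] at hLam
    have hr : (radialCoord (p, s, t) : ℝ) < 1 := by
      rw [coe_radialCoord (not_le.1 hrad).le]
      linarith
    obtain ⟨hG, hG'⟩ := hG₁ p _ θ hr hθ s t hLam
    obtain ⟨hF, hF'⟩ := (isSigmaOf_stabilisation he).1 p s t _ θ hθ hLam
    have h := hG'.trans hF'.symm
    exact Prod.ext (hG.trans hF.symm)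
      (Prod.ext (Subtype.ext congr(($h).1)) (Subtype.ext congr(($h).2)))

end Stabilisation

theorem statement5_general {M : Type} [TopologicalSpace M] [T2Space M] (P A : Set M)
    (e : ↥P × ↥I → M × ↥I) (he : IsConcMap P A e) :
    ∃ F : ↥P × ↥JJ × ↥I → M × ↥JJ × ↥I,
      -- σ(e) = F satisfies the two defining clauses of the stabilisation map,
      IsSigmaOf P e F ∧
      -- it is continuous,
      Continuous F ∧
      -- and it is the unique continuous map `G` that agrees with the inclusion on `P × D₂`
      -- and satisfies `G(p, Λ(r,θ)) = (e_M(p,r), Λ(e_I(p,r),θ))` for all `p ∈ P` and all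
      -- `(r,θ) ∈ [0,1) × [0,π]`.
      (∀ G : ↥P × ↥JJ × ↥I → M × ↥JJ × ↥I,
        Continuous G →
        (∀ (p : ↥P) (s : ↥JJ) (t : ↥I), ((s : ℝ), (t : ℝ)) ∈ D2 →
          G (p, s, t) = ((p : M), s, t)) →
        (∀ (p : ↥P) (r : ↥I) (θ : ℝ), (r : ℝ) < 1 → θ ∈ Set.Icc 0 Real.pi →
          ∀ (s : ↥JJ) (t : ↥I), ((s : ℝ), (t : ℝ)) = Lam ((r : ℝ), θ) →
          (G (p, s, t)).1 = (e (p, r)).1 ∧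
          (((G (p, s, t)).2.1 : ℝ), ((G (p, s, t)).2.2 : ℝ)) = Lam (((e (p, r)).2 : ℝ), θ)) →
        G = F) := by
  refine ⟨Stabilisation.stabilisation e, Stabilisation.isSigmaOf_stabilisation he,
    Stabilisation.continuous_stabilisation he, fun G hG hG₂ hG₁ => ?_⟩
  exact hG.ext_on ((dense_compl_singleton (1 : I)).preimage (isOpenMap_snd.comp isOpenMap_snd))
    (Stabilisation.continuous_stabilisation he) (Stabilisation.eqOn_stabilisation he hG₂ hG₁)

theorem statement5 {M : Type} [TopologicalSpace M] [T2Space M] (P A : Set M) (hAP : A ⊆ P)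
    (e : ↥P × ↥I → M × ↥I) (he : IsConcMap P A e) :
    ∃ F : ↥P × ↥JJ × ↥I → M × ↥JJ × ↥I,
      -- σ(e) = F satisfies the two defining clauses of the stabilisation map,
      IsSigmaOf P e F ∧
      -- it is continuous,
      Continuous F ∧
      -- and it is the unique continuous map `G` that agrees with the inclusion on `P × D₂`
      -- and satisfies `G(p, Λ(r,θ)) = (e_M(p,r), Λ(e_I(p,r),θ))` for all `p ∈ P` and all
      -- `(r,θ) ∈ [0,1) × [0,π]`.
      (∀ G : ↥P × ↥JJ × ↥I → M × ↥JJ × ↥I,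
        Continuous G →
        (∀ (p : ↥P) (s : ↥JJ) (t : ↥I), ((s : ℝ), (t : ℝ)) ∈ D2 →
          G (p, s, t) = ((p : M), s, t)) →
        (∀ (p : ↥P) (r : ↥I) (θ : ℝ), (r : ℝ) < 1 → θ ∈ Set.Icc 0 Real.pi →
          ∀ (s : ↥JJ) (t : ↥I), ((s : ℝ), (t : ℝ)) = Lam ((r : ℝ), θ) →
          (G (p, s, t)).1 = (e (p, r)).1 ∧
          (((G (p, s, t)).2.1 : ℝ), ((G (p, s, t)).2.2 : ℝ)) = Lam (((e (p, r)).2 : ℝ), θ)) →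
        G = F) :=
  statement5_general P A e he
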